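/- Let n ≥ 1 and let Γ : M_n(ℂ) → M_n(ℂ) be a unital real star ring homomorphism. Then there exists a unitary U ∈ M_n(ℂ) such that either Γ(α) = U · α · Uᴴ for all α, or Γ(α) = U · ᾱ · Uᴴ for all α, where ᾱ is the entrywise complex conjugate of α. -/

import Mathlib

/-!
The images `Fᵢⱼ = Γ(Eᵢⱼ)` of the matrix units again form a system of matrix units. For a unit
vector `v` fixed by the nonzero projection `F₁₁`, the vectors `Fₘ₁ v` are orthonormal, and the
unitary `U` with these columns satisfies `Fᵢⱼ = U Eᵢⱼ Uᴴ`. Then `Uᴴ Γ(·) U` fixes every `Eᵢⱼ`, so it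
maps scalar matrices to scalar matrices through a real algebra endomorphism `σ` of `ℂ`, which is
the identity or complex conjugation, and it acts on every matrix entrywise by `σ`.
-/

open Matrix in
def IsUnitalRealStarRingHom {n m : ℕ}
    (Γ : Matrix (Fin n) (Fin n) ℂ → Matrix (Fin m) (Fin m) ℂ) : Prop :=
  (∀ α β, Γ (α + β) = Γ α + Γ β) ∧
  (∀ α β, Γ (α * β) = Γ α * Γ β) ∧
  Γ 1 = 1 ∧
  (∀ (r : ℝ) (α), Γ (r • α) = r • Γ α) ∧
  (∀ α, Γ αᴴ = (Γ α)ᴴ)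

open Matrix

structure IsMatrixUnits {ι A : Type*} [Fintype ι] [DecidableEq ι] [Semiring A] [StarRing A]
    (e : ι → ι → A) : Prop where
  mul_eq : ∀ i j k l, e i j * e k l = if j = k then e i l else 0
  star_eq : ∀ i j, star (e i j) = e j i
  sum_eq_one : ∑ i, e i i = 1

namespace IsMatrixUnits

variable {ι A : Type*} [Fintype ι] [DecidableEq ι] [Semiring A] [StarRing A] {e : ι → ι → A}

theorem mul_self_eq (he : IsMatrixUnits e) (i j k : ι) : e i j * e j k = e i k := by
  simp [he.mul_eq]

theorem mul_eq_zero_of_ne (he : IsMatrixUnits e) {j k : ι} (hjk : j ≠ k) (i l : ι) :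
    e i j * e k l = 0 := by
  simp [he.mul_eq, hjk]

theorem map {B G : Type*} [Semiring B] [StarRing B] [FunLike G A B] [RingHomClass G A B]
    [StarHomClass G A B] (he : IsMatrixUnits e) (φ : G) : IsMatrixUnits fun i j ↦ φ (e i j) where
  mul_eq i j k l := by rw [← map_mul, he.mul_eq]; split_ifs <;> simp
  star_eq i j := by rw [← map_star, he.star_eq]
  sum_eq_one := by rw [← map_sum, he.sum_eq_one, map_one]

theorem ne_zero [Nontrivial A] (he : IsMatrixUnits e) (i : ι) : e i i ≠ 0 := by
  intro h0
  have hdiag (j : ι) : e j j = 0 := by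
    rw [← he.mul_self_eq j i j, ← he.mul_self_eq j i i, h0, mul_zero, zero_mul]
  exact one_ne_zero (he.sum_eq_one ▸ Finset.sum_eq_zero fun j _ ↦ hdiag j)

end IsMatrixUnits

namespace Matrix

variable {ι : Type*} [Fintype ι] [DecidableEq ι]

theorem isMatrixUnits_single {R : Type*} [Semiring R] [StarRing R] :
    IsMatrixUnits fun i j : ι ↦ single i j (1 : R) where
  mul_eq i j k l := by
    split_ifs with hjk
    · rw [hjk, single_mul_single_same, one_mul]
    · exact single_mul_single_of_ne (h := hjk) ..
  star_eq i j := by rw [star_eq_conjTranspose, conjTranspose_single, star_one]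
  sum_eq_one := sum_single_one

open scoped ComplexOrder in
theorem exists_mulVec_eq_self_of_isIdempotentElem {𝕜 : Type*} [RCLike 𝕜] {P : Matrix ι ι 𝕜}
    (hP : IsIdempotentElem P) (hP0 : P ≠ 0) : ∃ v, P *ᵥ v = v ∧ star v ⬝ᵥ v = 1 := by
  obtain ⟨a, b, hab⟩ : ∃ a b, P a b ≠ 0 := by
    by_contra! h
    exact hP0 (Matrix.ext h)
  set w := P *ᵥ Pi.single b 1 with hw
  have hPw : P *ᵥ w = w := by rw [hw, mulVec_mulVec, hP.eq]
  have hw0 : w ≠ 0 := fun h ↦ hab (by simpa [hw, mulVec_single_one] using congrFun h a)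
  obtain ⟨r, hr, hwr⟩ := RCLike.pos_iff_exists_ofReal.mp (dotProduct_star_self_pos_iff.mpr hw0)
  refine ⟨((√r : ℝ) : 𝕜)⁻¹ • w, by rw [mulVec_smul, hPw], ?_⟩
  have hsqrt : ((√r : ℝ) : 𝕜) ≠ 0 := by simpa using (Real.sqrt_pos.mpr hr).ne'
  rw [star_smul, smul_dotProduct, dotProduct_smul, ← hwr, star_inv₀, RCLike.star_def,
    RCLike.conj_ofReal, smul_eq_mul, smul_eq_mul]
  field_simp
  rw [← RCLike.ofReal_pow, Real.sq_sqrt hr.le]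

end Matrix

namespace IsMatrixUnits

variable {ι 𝕜 : Type*} [Fintype ι] [DecidableEq ι] [RCLike 𝕜]

theorem exists_unitary_conj_single [Nonempty ι] {e : ι → ι → Matrix ι ι 𝕜}
    (he : IsMatrixUnits e) : ∃ U ∈ unitaryGroup ι 𝕜, ∀ i j, e i j = U * single i j 1 * star U := by
  obtain ⟨z⟩ := ‹Nonempty ι›
  obtain ⟨v, hv, hv1⟩ :=
    exists_mulVec_eq_self_of_isIdempotentElem (he.mul_self_eq z z z) (he.ne_zero z)
  set U : Matrix ι ι 𝕜 := of fun p m ↦ (e m z *ᵥ v) p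
  have hUU : star U * U = 1 := by
    ext j k
    have hentry : (star U * U) j k = star v ⬝ᵥ (star (e j z) * e k z) *ᵥ v := by
      rw [← mulVec_mulVec, dotProduct_mulVec, star_eq_conjTranspose (e j z), ← star_mulVec]
      simp [U, mul_apply, dotProduct]
    rw [hentry, he.star_eq, he.mul_eq]
    split_ifs with hjk
    · rw [hjk, one_apply_eq, hv, hv1]
    · rw [one_apply_ne hjk, zero_mulVec, dotProduct_zero]
  have hU : U ∈ unitaryGroup ι 𝕜 := mem_unitaryGroup_iff'.mpr hUU
  have hintertwine (i j : ι) : e i j * U = U * single i j 1 := by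
    ext p m
    have hcol : (e i j * U) p m = ((e i j * e m z) *ᵥ v) p := by
      rw [← mulVec_mulVec]
      simp [U, mul_apply, mulVec, dotProduct]
    rcases eq_or_ne m j with rfl | hmj
    · rw [hcol, he.mul_self_eq, mul_single_apply_same, mul_one]
      rfl
    · rw [hcol, he.mul_eq_zero_of_ne hmj.symm, zero_mulVec, mul_single_apply_of_ne (hbj := hmj) ..]
      rfl
  refine ⟨U, hU, fun i j ↦ ?_⟩
  rw [← hintertwine, mul_assoc, mem_unitaryGroup_iff.mp hU, mul_one]

end IsMatrixUnits

namespace Matrix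

variable {ι : Type*} [Fintype ι] [DecidableEq ι]

theorem exists_algHom_eq_map_of_map_single {R K : Type*} [CommSemiring R] [CommSemiring K]
    [Algebra R K] [Nonempty ι] (ψ : Matrix ι ι K →ₐ[R] Matrix ι ι K)
    (hψ : ∀ i j, ψ (single i j 1) = single i j 1) : ∃ σ : K →ₐ[R] K, ∀ α, ψ α = α.map σ := by
  have hscalar (a : K) : ψ (scalar ι a) ∈ Set.range (scalar ι) :=
    mem_range_scalar_of_commute_single fun i j _ ↦ by
      simpa only [hψ] using (scalar_commute a (Commute.all a) (single i j 1)).symm.map ψ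
  choose f hf using hscalar
  have hinj {a b : K} (h : scalar ι a = scalar ι b) : a = b := scalar_inj.mp h
  let σ : K →ₐ[R] K :=
    { toFun := f
      map_one' := hinj (by simp only [hf, map_one])
      map_mul' a b := hinj (by simp only [hf, map_mul])
      map_zero' := hinj (by simp only [hf, map_zero])
      map_add' a b := hinj (by simp only [hf, map_add])
      commutes' r := hinj (by
        have hr : scalar ι (algebraMap R K r) = algebraMap R (Matrix ι ι K) r := rfl
        rw [hf, hr, ψ.commutes]) }
  have hψ_single (i j : ι) (a : K) : ψ (single i j a) = single i j (f a) := by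
    have hsingle (b : K) : single i j b = scalar ι b * single i j 1 := by
      ext p q
      simp [single_apply]
    rw [hsingle, map_mul, ← hf, hψ, ← hsingle]
  refine ⟨σ, fun α ↦ ?_⟩
  conv_lhs => rw [matrix_eq_sum_single α]
  conv_rhs => rw [matrix_eq_sum_single (α.map σ)]
  simp only [map_sum, hψ_single]
  rfl

end Matrix

theorem StarAlgHom.exists_unitary_conj_or_conj_map_star {ι : Type*} [Fintype ι] [DecidableEq ι]
    [Nonempty ι] (φ : Matrix ι ι ℂ →⋆ₐ[ℝ] Matrix ι ι ℂ) :
    ∃ U ∈ unitaryGroup ι ℂ, (∀ α, φ α = U * α * Uᴴ) ∨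
      (∀ α, φ α = U * α.map (starRingEnd ℂ) * Uᴴ) := by
  obtain ⟨U, hU, hφU⟩ := (isMatrixUnits_single.map φ).exists_unitary_conj_single
  let ψ : Matrix ι ι ℂ →ₐ[ℝ] Matrix ι ι ℂ :=
    ((Unitary.conjStarAlgAut ℝ _ (star ⟨U, hU⟩) : _ →⋆ₐ[ℝ] _).comp φ).toAlgHom
  have hψ (α) : ψ α = star U * φ α * U := by simp [ψ]
  have hψ_single (i j : ι) : ψ (single i j 1) = single i j 1 := by
    rw [hψ, hφU, ← mul_assoc, ← mul_assoc, mem_unitaryGroup_iff'.mp hU, one_mul, mul_assoc,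
      mem_unitaryGroup_iff'.mp hU, mul_one]
  obtain ⟨σ, hσ⟩ := exists_algHom_eq_map_of_map_single ψ hψ_single
  have hφ (α) : φ α = U * α.map σ * Uᴴ := by
    rw [← hσ, hψ, ← star_eq_conjTranspose, ← mul_assoc, ← mul_assoc, mem_unitaryGroup_iff.mp hU,
      one_mul, mul_assoc, mem_unitaryGroup_iff.mp hU, mul_one]
  refine ⟨U, hU, ?_⟩
  rcases Complex.real_algHom_eq_id_or_conj σ with rfl | rfl
  · exact .inl fun α ↦ by simpa using hφ α
  · exact .inr fun α ↦ by simpa using hφ α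

def IsUnitalRealStarRingHom.toStarAlgHom {n m : ℕ}
    {Γ : Matrix (Fin n) (Fin n) ℂ → Matrix (Fin m) (Fin m) ℂ} (hΓ : IsUnitalRealStarRingHom Γ) :
    Matrix (Fin n) (Fin n) ℂ →⋆ₐ[ℝ] Matrix (Fin m) (Fin m) ℂ where
  toFun := Γ
  map_add' := hΓ.1
  map_mul' := hΓ.2.1
  map_one' := hΓ.2.2.1
  map_zero' := by simpa using hΓ.1 0 0
  commutes' r := by simp only [Algebra.algebraMap_eq_smul_one, hΓ.2.2.2.1, hΓ.2.2.1]
  map_star' := hΓ.2.2.2.2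

open Matrix in
/-- a unital real star ring endomorphism of a complex matrix
algebra is either a unitary conjugation or a unitary conjugation composed with
entrywise complex conjugation. -/
theorem real_star_ring_endomorphism_matrix_characterisation
    (n : ℕ) (hn : 1 ≤ n)
    (Γ : Matrix (Fin n) (Fin n) ℂ → Matrix (Fin n) (Fin n) ℂ)
    (hΓ : IsUnitalRealStarRingHom Γ) :
    ∃ U ∈ Matrix.unitaryGroup (Fin n) ℂ,
      (∀ α : Matrix (Fin n) (Fin n) ℂ, Γ α = U * α * Uᴴ) ∨
      (∀ α : Matrix (Fin n) (Fin n) ℂ, Γ α = U * α.map (starRingEnd ℂ) * Uᴴ) := by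
  have : Nonempty (Fin n) := ⟨⟨0, hn⟩⟩
  exact hΓ.toStarAlgHom.exists_unitary_conj_or_conj_map_star
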